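/- arXiv:math/0604465 — 4 statements merged into one kernel-verified Lean document; each statement's English description precedes it below -/
import Mathlib

section
/- For an odd prime p and r ≥ 1, the number of images of the squaring map y ↦ y^2 on Z/p^r Z equals (p^(r+1) + p + 2)/(2(p+1)) if r is even, and (p^(r+1) + 2p + 1)/(2(p+1)) if r is odd. -/
/-!
Split the squares of `ZMod (p ^ r)` into units and non-units. The unit group is cyclic of even
order `φ (p ^ r)`, so exactly half of the units are squares. A non-unit square is `(p z) ^ 2 =
p ^ 2 z ^ 2`, and `z ↦ p ^ 2 z` identifies `ZMod (p ^ r)` with a subgroup of `ZMod (p ^ (r + 2))`,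
so the non-unit squares mod `p ^ (r + 2)` are in bijection with the squares mod `p ^ r`. Writing
`b r` for the number of squares mod `p ^ r`, this gives `2 b (r + 2) = φ (p ^ (r + 2)) + 2 b r`,
with `b 0 = 1` and `2 b 1 = p + 1`; the closed forms follow by induction within each parity class.
-/

open Set
open scoped Nat

abbrev squares (R : Type*) [Monoid R] : Set R := range fun y : R => y ^ 2

theorem ncard_squares_inter_isUnit (R : Type*) [CommMonoid R] :
    (squares R ∩ {x | IsUnit x}).ncard = Nat.card (powMonoidHom 2 : Rˣ →* Rˣ).range := by
  have h : squares R ∩ {x | IsUnit x} = Units.val '' range fun u : Rˣ => u ^ 2 := by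
    ext x
    simp only [mem_inter_iff, mem_range, mem_ofPred_eq, ← range_comp, Function.comp_def,
      Units.val_pow_eq_pow_val]
    constructor
    · rintro ⟨⟨y, rfl⟩, hy⟩
      exact ⟨((isUnit_pow_iff two_ne_zero).mp hy).unit, rfl⟩
    · rintro ⟨u, rfl⟩
      exact ⟨⟨u, rfl⟩, u.isUnit.pow 2⟩
  rw [h, ncard_image_of_injective _ Units.val_injective, ← Nat.card_coe_set_eq]
  rfl

namespace ZMod

def scaleHom (d n : ℕ) : ZMod n →+ ZMod (d * n) :=
  lift n ⟨(AddMonoidHom.mulLeft (d : ZMod (d * n))).comp (Int.castAddHom _), by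
    simp [← Nat.cast_mul]⟩

theorem scaleHom_intCast (d n : ℕ) (k : ℤ) : scaleHom d n k = d * k :=
  lift_coe _ _ k

theorem scaleHom_castHom (d n : ℕ) (x : ZMod (d * n)) :
    scaleHom d n (castHom (dvd_mul_left n d) (ZMod n) x) = d * x := by
  obtain ⟨k, rfl⟩ := intCast_surjective x
  rw [map_intCast, scaleHom_intCast]

theorem scaleHom_injective {d : ℕ} (hd : d ≠ 0) (n : ℕ) :
    Function.Injective (scaleHom d n) := by
  refine (injective_iff_map_eq_zero _).mpr fun a ha => ?_
  obtain ⟨k, rfl⟩ := intCast_surjective a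
  rw [scaleHom_intCast, ← Int.cast_natCast, ← Int.cast_mul, intCast_zmod_eq_zero_iff_dvd,
    Nat.cast_mul, mul_dvd_mul_iff_left (by exact_mod_cast hd)] at ha
  exact (intCast_zmod_eq_zero_iff_dvd k n).mpr ha

theorem ncard_image_mul_squares {d : ℕ} (hd : d ≠ 0) (n : ℕ) :
    ((fun x => (d : ZMod (d * n)) * x) '' squares (ZMod (d * n))).ncard =
      (squares (ZMod n)).ncard := by
  have h : (fun x => (d : ZMod (d * n)) * x) '' squares (ZMod (d * n)) =
      scaleHom d n '' squares (ZMod n) := by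
    rw [← range_comp, ← range_comp, ← (castHom_surjective (dvd_mul_left n d)).range_comp]
    congr 1
    ext y
    simp [← scaleHom_castHom]
  rw [h, ncard_image_of_injective _ (scaleHom_injective hd n)]

theorem ncard_squares_one : (squares (ZMod 1)).ncard = 1 :=
  ncard_eq_one.mpr ⟨0, subsingleton_of_subsingleton.eq_singleton_of_mem ⟨0, rfl⟩⟩

variable {p : ℕ}

theorem not_isUnit_iff_prime_dvd (hp : p.Prime) {d : ℕ} (hd : 0 < d) (y : ZMod (p ^ d)) :
    ¬IsUnit y ↔ (p : ZMod (p ^ d)) ∣ y := by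
  have : NeZero (p ^ d) := ⟨pow_ne_zero d hp.ne_zero⟩
  constructor
  · intro hy
    rw [← natCast_zmod_val y, isUnit_natCast_iff_not_dvd_pow hp hd, not_not] at hy
    obtain ⟨k, hk⟩ := hy
    exact ⟨k, by rw [← natCast_zmod_val y, hk, Nat.cast_mul]⟩
  · rintro ⟨z, rfl⟩ hy
    exact prime_natCast_not_isUnit_pow hp hd (isUnit_of_mul_isUnit_left hy)

theorem squares_sdiff_isUnit_eq_image (hp : p.Prime) {d : ℕ} (hd : 0 < d) :
    squares (ZMod (p ^ d)) \ {x | IsUnit x} =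
      (fun x => (p : ZMod (p ^ d)) ^ 2 * x) '' squares (ZMod (p ^ d)) := by
  ext x
  simp only [mem_sdiff, mem_range, mem_ofPred_eq, ← range_comp, Function.comp_def]
  constructor
  · rintro ⟨⟨y, rfl⟩, hy⟩
    obtain ⟨z, rfl⟩ := (not_isUnit_iff_prime_dvd hp hd y).mp fun h => hy (h.pow 2)
    exact ⟨z, by ring⟩
  · rintro ⟨z, rfl⟩
    refine ⟨⟨p * z, by ring⟩, ?_⟩
    rw [← mul_pow, isUnit_pow_iff two_ne_zero, not_isUnit_iff_prime_dvd hp hd]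
    exact dvd_mul_right _ _

theorem two_mul_ncard_squares_inter_isUnit (hp : p.Prime) (hp2 : p ≠ 2) {d : ℕ} (hd : 0 < d) :
    2 * (squares (ZMod (p ^ d)) ∩ {x | IsUnit x}).ncard = φ (p ^ d) := by
  have : NeZero (p ^ d) := ⟨pow_ne_zero d hp.ne_zero⟩
  have := isCyclic_units_of_prime_pow p hp hp2 d
  have hp3 : 3 ≤ p := hp.two_le.lt_of_ne' hp2
  have hφ : Even (φ (p ^ d)) := Nat.totient_even (hp3.trans (Nat.le_self_pow hd.ne' p))
  rw [ncard_squares_inter_isUnit, IsCyclic.card_powMonoidHom_range, Nat.card_eq_fintype_card,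
    card_units_eq_totient, Nat.gcd_eq_right (even_iff_two_dvd.mp hφ),
    Nat.mul_div_cancel' (even_iff_two_dvd.mp hφ)]

theorem two_mul_ncard_squares_prime (hp : p.Prime) (hp2 : p ≠ 2) :
    2 * (squares (ZMod p)).ncard = p + 1 := by
  have := Fact.mk hp
  have hunits := two_mul_ncard_squares_inter_isUnit hp hp2 one_pos
  rw [pow_one, Nat.totient_prime hp] at hunits
  have hnonunits : squares (ZMod p) \ {x | IsUnit x} = {0} := by
    ext x
    simp only [mem_sdiff, mem_ofPred_eq, isUnit_iff_ne_zero, not_not, mem_singleton_iff]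
    exact ⟨And.right, by rintro rfl; exact ⟨⟨0, zero_pow two_ne_zero⟩, rfl⟩⟩
  rw [← ncard_inter_add_ncard_sdiff_eq_ncard (squares (ZMod p)) {x | IsUnit x}, mul_add, hunits,
    hnonunits, ncard_singleton]
  have := hp.one_le
  omega

theorem two_mul_ncard_squares_prime_pow_add_two (hp : p.Prime) (hp2 : p ≠ 2) (m : ℕ) :
    2 * (squares (ZMod (p ^ (m + 2)))).ncard + p ^ (m + 1) =
      p ^ (m + 2) + 2 * (squares (ZMod (p ^ m))).ncard := by
  have : NeZero (p ^ (m + 2)) := ⟨pow_ne_zero _ hp.ne_zero⟩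
  have hnonunits := ncard_image_mul_squares (pow_ne_zero 2 hp.ne_zero) (p ^ m)
  rw [← pow_add, add_comm, Nat.cast_pow] at hnonunits
  rw [← ncard_inter_add_ncard_sdiff_eq_ncard (squares _) {x | IsUnit x}, mul_add,
    two_mul_ncard_squares_inter_isUnit hp hp2 (by omega),
    squares_sdiff_isUnit_eq_image hp (by omega), hnonunits, Nat.totient_prime_pow_succ hp,
    add_right_comm, ← mul_add_one, Nat.sub_add_cancel hp.one_le, ← pow_succ]

theorem two_mul_succ_mul_ncard_squares_even_pow (hp : p.Prime) (hp2 : p ≠ 2) (k : ℕ) :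
    2 * (p + 1) * (squares (ZMod (p ^ (2 * k)))).ncard = p ^ (2 * k + 1) + p + 2 := by
  induction k with
  | zero => rw [mul_zero, pow_zero, ncard_squares_one]; ring
  | succ k ih =>
    have step := two_mul_ncard_squares_prime_pow_add_two hp hp2 (2 * k)
    rw [show 2 * (k + 1) = 2 * k + 2 by ring]
    linear_combination (p + 1) * step + ih

theorem two_mul_succ_mul_ncard_squares_odd_pow (hp : p.Prime) (hp2 : p ≠ 2) (k : ℕ) :
    2 * (p + 1) * (squares (ZMod (p ^ (2 * k + 1)))).ncard = p ^ (2 * k + 2) + 2 * p + 1 := by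
  induction k with
  | zero =>
    rw [mul_zero, zero_add, pow_one, mul_right_comm, two_mul_ncard_squares_prime hp hp2]
    ring
  | succ k ih =>
    have step := two_mul_ncard_squares_prime_pow_add_two hp hp2 (2 * k + 1)
    rw [show 2 * (k + 1) + 1 = 2 * k + 1 + 2 by ring]
    linear_combination (p + 1) * step + ih

end ZMod

theorem card_squares_oddPrimePower_general (p : ℕ) (hp : p.Prime) (hp2 : p ≠ 2) (r : ℕ) :
    (Even r →
      Nat.card (Set.range (fun y : ZMod (p ^ r) => y ^ 2)) =
        (p ^ (r + 1) + p + 2) / (2 * (p + 1))) ∧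
    (Odd r →
      Nat.card (Set.range (fun y : ZMod (p ^ r) => y ^ 2)) =
        (p ^ (r + 1) + 2 * p + 1) / (2 * (p + 1))) := by
  rw [Nat.card_coe_set_eq]
  refine ⟨fun ⟨k, hk⟩ => ?_, fun ⟨k, hk⟩ => ?_⟩ <;> subst hk <;> symm <;>
    refine Nat.div_eq_of_eq_mul_right (by positivity) ?_
  · rw [← two_mul, ZMod.two_mul_succ_mul_ncard_squares_even_pow hp hp2]
  · rw [ZMod.two_mul_succ_mul_ncard_squares_odd_pow hp hp2]

theorem card_squares_oddPrimePower (p : ℕ) (hp : p.Prime) (hp2 : p ≠ 2) (r : ℕ) (hr : 1 ≤ r) :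
    (Even r →
      Nat.card (Set.range (fun y : ZMod (p ^ r) => y ^ 2)) =
        (p ^ (r + 1) + p + 2) / (2 * (p + 1))) ∧
    (Odd r →
      Nat.card (Set.range (fun y : ZMod (p ^ r) => y ^ 2)) =
        (p ^ (r + 1) + 2 * p + 1) / (2 * (p + 1))) :=
  card_squares_oddPrimePower_general p hp hp2 r
end

section
/- An element w of Z/nZ is both a square and a cube if and only if it is a sixth power: there exist u, v with w = u^2 = v^3 if and only if there exists z with w = z^6. -/
/-!
If `u ^ 2 = v ^ 3` with `v` a unit, then `u ^ 2 = (u * v⁻¹) ^ 6`. Modulo `p ^ k`, unless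
`u ^ 2 ≡ 0`, a congruence `u ^ 2 ≡ v ^ 3` forces `u ^ 2` and `v ^ 3` to have the same `p`-adic
valuation, so `u = p ^ (3 c) u'` and `v = p ^ (2 c) v'` with `p ∤ v'`; cancelling `p ^ (6 c)`
leaves the unit case modulo `p ^ (k - 6 c)`. In `ℤ = ZMod 0`, unique factorization gives `v ∣ u`,
and `u = v t` forces `t ^ 2 = v`. The Chinese remainder theorem assembles the prime powers.
-/

def SquaresCubesAreSixthPowers (M : Type*) [Monoid M] : Prop :=
  ∀ u v : M, u ^ 2 = v ^ 3 → ∃ z, u ^ 2 = z ^ 6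

namespace SquaresCubesAreSixthPowers

variable {M N : Type*} [Monoid M] [Monoid N]

theorem of_mulEquiv (e : M ≃* N) (h : SquaresCubesAreSixthPowers M) :
    SquaresCubesAreSixthPowers N := by
  intro u v huv
  obtain ⟨z, hz⟩ := h (e.symm u) (e.symm v) (by simp only [← map_pow, huv])
  exact ⟨e z, by simpa using congrArg e hz⟩

theorem prod (hM : SquaresCubesAreSixthPowers M) (hN : SquaresCubesAreSixthPowers N) :
    SquaresCubesAreSixthPowers (M × N) := by
  rintro ⟨u₁, u₂⟩ ⟨v₁, v₂⟩ h
  obtain ⟨z₁, hz₁⟩ := hM u₁ v₁ (congrArg Prod.fst h)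
  obtain ⟨z₂, hz₂⟩ := hN u₂ v₂ (congrArg Prod.snd h)
  exact ⟨(z₁, z₂), Prod.ext hz₁ hz₂⟩

theorem of_uniqueFactorizationMonoid {R : Type*} [CommMonoidWithZero R]
    [UniqueFactorizationMonoid R] : SquaresCubesAreSixthPowers R := by
  intro u v h
  by_cases hv : v = 0
  · exact ⟨0, by simp [h, hv]⟩
  obtain ⟨t, rfl⟩ : v ∣ u := (UniqueFactorizationMonoid.pow_dvd_pow_iff_dvd two_ne_zero).1
    (h ▸ pow_dvd_pow v (by norm_num))
  rw [mul_pow, pow_succ v 2] at h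
  have ht : t ^ 2 = v := mul_left_cancel₀ (pow_ne_zero 2 hv) h
  exact ⟨t, by rw [mul_pow, h, ← ht, ← pow_succ, ← pow_mul]⟩

end SquaresCubesAreSixthPowers

theorem pow_six_mul_inv_eq_sq {M : Type*} [CommMonoid M] {u : M} {v : Mˣ}
    (h : u ^ 2 = v ^ 3) : (u * ↑v⁻¹) ^ 6 = u ^ 2 :=
  calc (u * ↑v⁻¹) ^ 6 = (u ^ 2) ^ 3 * (↑v⁻¹ : M) ^ 6 := by rw [mul_pow, ← pow_mul]
    _ = (v : M) ^ 3 * (v * ↑v⁻¹ : M) ^ 6 := by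
      rw [h, mul_pow, ← pow_mul, ← mul_assoc, ← pow_add]
    _ = u ^ 2 := by rw [Units.mul_inv, one_pow, mul_one, h]

theorem exists_dvd_sq_sub_pow_six_of_isCoprime {R : Type*} [CommRing R] {m u v : R}
    (hv : IsCoprime v m) (h : m ∣ u ^ 2 - v ^ 3) : ∃ z, m ∣ u ^ 2 - z ^ 6 := by
  let π := Ideal.Quotient.mk (Ideal.span {m})
  have hπ (a b : R) : π a = π b ↔ m ∣ a - b := by
    rw [Ideal.Quotient.eq, Ideal.mem_span_singleton]
  obtain ⟨a, b, hab⟩ := hv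
  have hva : π v * π a = 1 := by
    rw [← map_mul, ← map_one π, hπ, ← hab, mul_comm, sub_add_cancel_left, dvd_neg]
    exact dvd_mul_left m b
  let v' := Units.mkOfMulEqOne _ _ hva
  have hsq : π u ^ 2 = v' ^ 3 := by
    rw [← map_pow, Units.val_mkOfMulEqOne, ← map_pow, hπ]
    exact h
  refine ⟨u * a, (hπ _ _).1 ?_⟩
  rw [map_pow, map_pow, map_mul, ← pow_six_mul_inv_eq_sq hsq]
  rfl

theorem emultiplicity_eq_of_pow_dvd_sub {R : Type*} [CommRing R] {p a b : R} {k : ℕ}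
    (ha : ¬p ^ k ∣ a) (h : p ^ k ∣ a - b) : emultiplicity p a = emultiplicity p b := by
  have hb : ¬p ^ k ∣ b := fun hb ↦ ha (by simpa using dvd_add h hb)
  refine emultiplicity_eq_emultiplicity_iff.2 fun n ↦ ?_
  rcases le_or_gt n k with hn | hn
  · have hn' := (pow_dvd_pow p hn).trans h
    exact ⟨fun ha ↦ (dvd_sub_right ha).1 hn', fun hb ↦ (dvd_sub_left hb).1 hn'⟩
  · exact iff_of_false (fun h' ↦ ha ((pow_dvd_pow p hn.le).trans h'))
      (fun h' ↦ hb ((pow_dvd_pow p hn.le).trans h'))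

theorem exists_pow_dvd_sq_sub_pow_six {R : Type*} [CommRing R] [IsDomain R]
    [IsPrincipalIdealRing R] {p : R} (hp : Prime p) {k : ℕ} {u v : R}
    (h : p ^ k ∣ u ^ 2 - v ^ 3) : ∃ z, p ^ k ∣ u ^ 2 - z ^ 6 := by
  by_cases hu : p ^ k ∣ u ^ 2
  · exact ⟨0, by simpa using hu⟩
  have hu0 : u ≠ 0 := by rintro rfl; simp at hu
  have hv0 : v ≠ 0 := by rintro rfl; simp_all
  have hfu := FiniteMultiplicity.of_prime_left hp hu0
  have hfv := FiniteMultiplicity.of_prime_left hp hv0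
  have hmul : 2 * multiplicity p u = 3 * multiplicity p v := by
    rw [← hfu.multiplicity_pow hp, ← hfv.multiplicity_pow hp]
    exact multiplicity_eq_of_emultiplicity_eq (emultiplicity_eq_of_pow_dvd_sub hu h)
  obtain ⟨c, hcu, hcv⟩ : ∃ c, multiplicity p u = 3 * c ∧ multiplicity p v = 2 * c :=
    ⟨multiplicity p u / 3, by omega, by omega⟩
  obtain ⟨u', hu', -⟩ := hfu.exists_eq_pow_mul_and_not_dvd
  obtain ⟨v', hv', hpv'⟩ := hfv.exists_eq_pow_mul_and_not_dvd
  have hsq : u ^ 2 = p ^ (6 * c) * u' ^ 2 := by rw [hu', hcu]; ring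
  have hcube : v ^ 3 = p ^ (6 * c) * v' ^ 3 := by rw [hv', hcv]; ring
  obtain ⟨j, rfl⟩ : ∃ j, k = 6 * c + j := Nat.exists_eq_add_of_le <| by
    by_contra! hk
    exact hu (hsq ▸ (pow_dvd_pow p hk.le).trans (dvd_mul_right _ _))
  rw [hsq, hcube, ← mul_sub, pow_add, mul_dvd_mul_iff_left (pow_ne_zero _ hp.ne_zero)] at h
  obtain ⟨z, hz⟩ :=
    exists_dvd_sq_sub_pow_six_of_isCoprime (hp.coprime_iff_not_dvd.2 hpv').symm.pow_right h
  refine ⟨p ^ c * z, ?_⟩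
  rw [hsq, pow_add, mul_pow, ← pow_mul, mul_comm c, ← mul_sub]
  exact mul_dvd_mul_left _ hz

namespace ZMod

theorem squaresCubesAreSixthPowers_prime_pow {p : ℕ} (hp : p.Prime) (k : ℕ) :
    SquaresCubesAreSixthPowers (ZMod (p ^ k)) := by
  intro u v h
  obtain ⟨u, rfl⟩ := intCast_surjective u
  obtain ⟨v, rfl⟩ := intCast_surjective v
  have hdvd (a b : ℤ) : (a : ZMod (p ^ k)) = b ↔ (p : ℤ) ^ k ∣ a - b := by
    rw [← sub_eq_zero, ← Int.cast_sub, intCast_zmod_eq_zero_iff_dvd, Nat.cast_pow]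
  obtain ⟨z, hz⟩ := exists_pow_dvd_sq_sub_pow_six (Nat.prime_iff_prime_int.1 hp)
    ((hdvd _ _).1 (by push_cast; exact h))
  exact ⟨z, by exact_mod_cast (hdvd _ _).2 hz⟩

theorem squaresCubesAreSixthPowers (n : ℕ) : SquaresCubesAreSixthPowers (ZMod n) := by
  induction n using Nat.recOnPrimeCoprime with
  | zero => exact SquaresCubesAreSixthPowers.of_uniqueFactorizationMonoid (R := ℤ)
  | prime_pow p k hp => exact squaresCubesAreSixthPowers_prime_pow hp k
  | coprime a b _ _ hab ha hb =>
    exact (ha.prod hb).of_mulEquiv (chineseRemainder hab).symm.toMulEquiv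

end ZMod

theorem square_and_cube_iff_sixthPower_general (n : ℕ) (w : ZMod n) :
    (∃ u v : ZMod n, w = u ^ 2 ∧ w = v ^ 3) ↔ ∃ z : ZMod n, w = z ^ 6 := by
  constructor
  · rintro ⟨u, v, hu, hv⟩
    obtain ⟨z, hz⟩ := ZMod.squaresCubesAreSixthPowers n u v (hu ▸ hv)
    exact ⟨z, hu.trans hz⟩
  · rintro ⟨z, rfl⟩
    exact ⟨z ^ 3, z ^ 2, by ring, by ring⟩

theorem square_and_cube_iff_sixthPower (n : ℕ) (hn : 1 ≤ n) (w : ZMod n) :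
    (∃ u v : ZMod n, w = u ^ 2 ∧ w = v ^ 3) ↔ ∃ z : ZMod n, w = z ^ 6 :=
  square_and_cube_iff_sixthPower_general n w
end

section
/- For real s > 1, the Dirichlet series of the number of square roots of zero, ∑_{n≥1} a(n)/n^s where a(n) = #{x ∈ Z/nZ : x^2 = 0}, equals ζ(2s-1)ζ(s)/ζ(2s). -/
/-!
Grouping the solutions `k ∈ [0, n)` of `n ∣ k²` by `g = gcd(n, k)`: since `n ∣ k²` iff `n ∣ g²`,
each fibre has `φ(n / g)` elements, so `a(n) = ∑_{d² ∣ n} φ(d)`. Thus `a = φ(√·) ⋆ 1` with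
`φ(√·)` supported on the squares, whose Dirichlet series at `s` is that of `φ` at `2s`; and
`φ ⋆ 1 = id` gives `∑ φ(n) n^{-s} = ζ(s - 1) / ζ(s)`.
-/

open Finset LSeries
open scoped LSeries.notation

namespace Nat

theorem dvd_sq_iff_dvd_gcd_sq {n k : ℕ} : n ∣ k ^ 2 ↔ n ∣ n.gcd k ^ 2 := by
  rw [← pow_gcd_pow, dvd_gcd_iff]
  exact ⟨fun h => ⟨dvd_pow_self n two_ne_zero, h⟩, And.right⟩

theorem dvd_sq_iff_div_sq_dvd {n g : ℕ} (hn : n ≠ 0) (hg : g ∣ n) :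
    n ∣ g ^ 2 ↔ (n / g) ^ 2 ∣ n := by
  obtain ⟨h, rfl⟩ := hg
  have hg0 : g ≠ 0 := left_ne_zero_of_mul hn
  have hh0 : h ≠ 0 := right_ne_zero_of_mul hn
  rw [Nat.mul_div_cancel_left h (pos_of_ne_zero hg0), sq, sq,
    mul_dvd_mul_iff_left hg0, mul_dvd_mul_iff_right hh0]

end Nat

namespace ZMod

theorem card_sq_eq_zero (n : ℕ) [NeZero n] :
    Nat.card {x : ZMod n // x ^ 2 = 0} = #{k ∈ range n | n ∣ k ^ 2} := by
  rw [Nat.card_eq_fintype_card, Fintype.card_subtype]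
  refine card_nbij' val (↑) (fun x hx => ?_) (fun k hk => ?_) (fun x _ => natCast_zmod_val x)
    (fun k hk => val_cast_of_lt (mem_range.mp (mem_filter.mp hk).1))
  · simp_all [val_lt, ← natCast_eq_zero_iff]
  · simp_all [← natCast_eq_zero_iff]

theorem card_sq_eq_zero_eq_sum_totient (n : ℕ) [NeZero n] :
    Nat.card {x : ZMod n // x ^ 2 = 0} = ∑ d ∈ n.divisors with d ^ 2 ∣ n, d.totient := by
  have hn : n ≠ 0 := NeZero.ne n
  have hgcd : Set.MapsTo n.gcd ({k ∈ range n | n ∣ k ^ 2} : Finset ℕ) n.divisors := fun k _ =>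
    Nat.mem_divisors.mpr ⟨Nat.gcd_dvd_left n k, hn⟩
  have hfiber : ∀ g ∈ n.divisors, #{k ∈ {k ∈ range n | n ∣ k ^ 2} | n.gcd k = g} =
      if (n / g) ^ 2 ∣ n then (n / g).totient else 0 := by
    intro g hg
    have hgn := Nat.dvd_of_mem_divisors hg
    simp only [← Nat.dvd_sq_iff_div_sq_dvd hn hgn, filter_filter]
    split_ifs with h
    · rw [Nat.totient_div_of_dvd hgn]
      congr 1
      ext k
      simp only [mem_filter]
      exact ⟨fun hk => ⟨hk.1, hk.2.2⟩,
        fun hk => ⟨hk.1, Nat.dvd_sq_iff_dvd_gcd_sq.mpr (hk.2 ▸ h), hk.2⟩⟩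
    · rw [card_eq_zero, filter_eq_empty_iff]
      exact fun k _ hk => h (hk.2 ▸ Nat.dvd_sq_iff_dvd_gcd_sq.mp hk.1)
  rw [card_sq_eq_zero, card_eq_sum_card_fiberwise hgcd, sum_congr rfl hfiber,
    Nat.sum_div_divisors n (fun d => if d ^ 2 ∣ n then d.totient else 0), sum_filter]

end ZMod

def onSquares {R : Type*} [Zero R] (f : ℕ → R) (m : ℕ) : R :=
  if m.sqrt ^ 2 = m then f m.sqrt else 0

section onSquares

variable {R : Type*}

@[simp]
theorem onSquares_sq [Zero R] (f : ℕ → R) (d : ℕ) : onSquares f (d ^ 2) = f d := by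
  simp [onSquares, Nat.sqrt_eq']

theorem onSquares_eq_zero [Zero R] (f : ℕ → R) {m : ℕ} (hm : m ∉ Set.range (· ^ 2)) :
    onSquares f m = 0 :=
  if_neg fun h => hm ⟨m.sqrt, h⟩

theorem sum_divisors_onSquares [AddCommMonoid R] (f : ℕ → R) (n : ℕ) :
    ∑ m ∈ n.divisors, onSquares f m = ∑ d ∈ n.divisors with d ^ 2 ∣ n, f d := by
  have hinj : Set.InjOn (· ^ 2) ({d ∈ n.divisors | d ^ 2 ∣ n} : Finset ℕ) :=
    (Nat.pow_left_injective two_ne_zero).injOn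
  rw [← sum_subset (s₁ := image (· ^ 2) {d ∈ n.divisors | d ^ 2 ∣ n}), sum_image hinj]
  · simp only [onSquares_sq]
  · intro m hm
    obtain ⟨d, hd, rfl⟩ := mem_image.mp hm
    obtain ⟨hdn, hsq⟩ := mem_filter.mp hd
    exact Nat.mem_divisors.mpr ⟨hsq, Nat.ne_zero_of_mem_divisors hdn⟩
  · rintro m hm hm'
    refine onSquares_eq_zero f fun ⟨d, hd⟩ => hm' ?_
    subst hd
    have hdn := Nat.dvd_of_mem_divisors hm
    exact mem_image_of_mem _ (mem_filter.mpr ⟨Nat.mem_divisors.mpr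
      ⟨(dvd_pow_self d two_ne_zero).trans hdn, Nat.ne_zero_of_mem_divisors hm⟩, hdn⟩)

end onSquares

namespace LSeries

theorem term_onSquares_comp_sq (f : ℕ → ℂ) (s : ℂ) :
    term (onSquares f) s ∘ (· ^ 2) = term f (2 * s) := by
  ext d
  rcases eq_or_ne d 0 with rfl | hd
  · simp
  · simp [hd, ← Complex.natCast_cpow_natCast_mul]

theorem term_onSquares_eq_zero (f : ℕ → ℂ) (s : ℂ) {m : ℕ} (hm : m ∉ Set.range (· ^ 2)) :
    term (onSquares f) s m = 0 := by
  simp [term_def, onSquares_eq_zero f hm]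

end LSeries

theorem LSeriesSummable_onSquares_iff {f : ℕ → ℂ} {s : ℂ} :
    LSeriesSummable (onSquares f) s ↔ LSeriesSummable f (2 * s) := by
  rw [LSeriesSummable, LSeriesSummable, ← term_onSquares_comp_sq]
  exact ((Nat.pow_left_injective two_ne_zero).summable_iff
    fun m hm => term_onSquares_eq_zero f s hm).symm

theorem LSeries_onSquares (f : ℕ → ℂ) (s : ℂ) : L (onSquares f) s = L f (2 * s) := by
  rw [LSeries, LSeries, ← term_onSquares_comp_sq]
  refine ((Nat.pow_left_injective two_ne_zero).tsum_eq fun m hm => ?_).symm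
  by_contra h
  exact hm (term_onSquares_eq_zero f s h)

theorem LSeries_natCast_mul (f : ℕ → ℂ) (s : ℂ) : L (fun n => n * f n) s = L f (s - 1) := by
  refine tsum_congr fun n => ?_
  rcases eq_or_ne n 0 with rfl | hn
  · simp
  · have hn' : (n : ℂ) ≠ 0 := Nat.cast_ne_zero.mpr hn
    rw [term_of_ne_zero hn, term_of_ne_zero hn, Complex.cpow_sub _ _ hn', Complex.cpow_one]
    field_simp

theorem LSeriesSummable_totient {s : ℂ} (hs : 2 < s.re) : LSeriesSummable ↗Nat.totient s := by
  refine LSeriesSummable_of_le_const_mul_rpow hs ⟨1, fun n _ => ?_⟩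
  rw [one_mul, show (2 : ℝ) - 1 = 1 by norm_num, Real.rpow_one, Complex.norm_natCast]
  exact_mod_cast Nat.totient_le n

theorem LSeries_totient_mul_riemannZeta {s : ℂ} (hs : 2 < s.re) :
    L ↗Nat.totient s * riemannZeta s = riemannZeta (s - 1) := by
  have hs1 : 1 < s.re := by linarith
  have hs1' : 1 < (s - 1).re := by rw [Complex.sub_re, Complex.one_re]; linarith
  rw [← LSeries_one_eq_riemannZeta hs1, ← LSeries_one_eq_riemannZeta hs1',
    ← LSeries_convolution' (LSeriesSummable_totient hs) (LSeriesSummable_one_iff.mpr hs1),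
    ← LSeries_natCast_mul]
  refine LSeries_congr (fun {n} _ => ?_) s
  simp [convolution_def, Nat.sum_divisorsAntidiagonal (f := fun i _ => (i.totient : ℂ)),
    ← Nat.cast_sum, Nat.sum_totient]

theorem LSeries_totient {s : ℂ} (hs : 2 < s.re) :
    L ↗Nat.totient s = riemannZeta (s - 1) / riemannZeta s := by
  rw [eq_div_iff (riemannZeta_ne_zero_of_one_lt_re (by linarith)),
    LSeries_totient_mul_riemannZeta hs]

theorem ZMod.card_sq_eq_zero_eq_convolution {n : ℕ} (hn : n ≠ 0) :
    (Nat.card {x : ZMod n // x ^ 2 = 0} : ℂ) = (onSquares ↗Nat.totient ⍟ 1) n := by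
  have : NeZero n := ⟨hn⟩
  rw [card_sq_eq_zero_eq_sum_totient, Nat.cast_sum, ← sum_divisors_onSquares]
  simp only [convolution_def, Pi.one_apply, mul_one]
  exact (Nat.sum_divisorsAntidiagonal (fun i _ => onSquares ↗Nat.totient i)).symm

theorem squareRootsOfZero_dirichletSeries (s : ℝ) (hs : 3 / 2 < s) :
    (∑' n : ℕ, (Nat.card {x : ZMod n // x ^ 2 = 0} : ℂ) / (n : ℂ) ^ (s : ℂ)) =
      riemannZeta (2 * s - 1) * riemannZeta s / riemannZeta (2 * s) := by
  have hs0 : (s : ℂ) ≠ 0 := Complex.ofReal_ne_zero.mpr (by linarith)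
  have hs1 : 1 < (s : ℂ).re := by rw [Complex.ofReal_re]; linarith
  have hs2 : 2 < (2 * s : ℂ).re := by
    simp only [Complex.mul_re, Complex.re_ofNat, Complex.ofReal_re, Complex.im_ofNat, zero_mul,
      sub_zero]
    linarith
  calc ∑' n : ℕ, (Nat.card {x : ZMod n // x ^ 2 = 0} : ℂ) / (n : ℂ) ^ (s : ℂ)
      = L (fun n => (Nat.card {x : ZMod n // x ^ 2 = 0} : ℂ)) s :=
        -- the `n = 0` summands agree because `0 ^ (s : ℂ) = 0` for `s ≠ 0`
        tsum_congr fun n => by rw [term_of_ne_zero' hs0]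
    _ = L (onSquares ↗Nat.totient ⍟ 1) s :=
        LSeries_congr (fun hn => ZMod.card_sq_eq_zero_eq_convolution hn) _
    _ = L ↗Nat.totient (2 * s) * riemannZeta s := by
        rw [LSeries_convolution' (LSeriesSummable_onSquares_iff.mpr (LSeriesSummable_totient hs2))
          (LSeriesSummable_one_iff.mpr hs1), LSeries_onSquares, LSeries_one_eq_riemannZeta hs1]
    _ = _ := by
        rw [LSeries_totient hs2]
        ring
end

section
/- For a prime p and real s > 5/3, the local Euler factor ∑_{r≥0} p^{⌊2r/3⌋}/p^{rs} equals (1 - p^{2-3s})^{-1}(1 + p^{-s} + p^{1-2s}). -/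
open Real

theorem euler_factor_cbrt_zero (p : ℕ) (hp : p.Prime) (s : ℝ) (hs : 5 / 3 < s) :
    (∑' r : ℕ, (p : ℝ) ^ (2 * r / 3) / (p : ℝ) ^ ((r : ℝ) * s)) =
      (1 - (p : ℝ) ^ ((2 : ℝ) - 3 * s))⁻¹ *
        (1 + (p : ℝ) ^ (-s) + (p : ℝ) ^ ((1 : ℝ) - 2 * s)) := by
  have hp1 : (1:ℝ) < p := by exact_mod_cast hp.one_lt
  have hp0 : (0:ℝ) < p := by linarith
  set x : ℝ := (p:ℝ) ^ ((2:ℝ) - 3*s) with hxdef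
  have hx0 : 0 ≤ x := Real.rpow_nonneg hp0.le _
  have hx1 : x < 1 := Real.rpow_lt_one_of_one_lt_of_neg hp1 (by linarith)
  set g : Fin 3 → ℝ := ![1, (p:ℝ) ^ (-s), (p:ℝ) ^ ((1:ℝ) - 2*s)] with hgdef
  have key : ∀ (a b : ℕ) (c : ℝ), (a:ℝ) - (b:ℝ)*s = c →
      (p:ℝ)^a / (p:ℝ)^((b:ℝ)*s) = (p:ℝ)^c := by
    intro a b c h
    rw [← Real.rpow_natCast (p:ℝ) a, ← Real.rpow_sub hp0, h]
  have hxq : ∀ q : ℕ, x ^ q = (p:ℝ) ^ (((2:ℝ) - 3*s) * q) := by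
    intro q
    rw [← Real.rpow_natCast x q, hxdef, ← Real.rpow_mul hp0.le]
  have hkey : ∀ (qi : ℕ × Fin 3),
      (p:ℝ) ^ (2 * ((Nat.divModEquiv 3).symm qi) / 3) /
        (p:ℝ) ^ ((((Nat.divModEquiv 3).symm qi : ℕ) : ℝ) * s) = g qi.2 * x ^ qi.1 := by
    rintro ⟨q, i⟩
    have he : ((Nat.divModEquiv 3).symm (q, i) : ℕ) = q * 3 + (i : ℕ) := rfl
    rw [he]
    fin_cases i
    · show (p:ℝ) ^ (2 * (q*3 + 0) / 3) / (p:ℝ) ^ (((q*3 + 0 : ℕ) : ℝ) * s) = 1 * x ^ q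
      rw [show 2 * (q*3 + 0) / 3 = 2*q by omega, key (2*q) (q*3+0) (((2:ℝ)-3*s)*q)
        (by push_cast; ring), hxq q, one_mul]
    · show (p:ℝ) ^ (2 * (q*3 + 1) / 3) / (p:ℝ) ^ (((q*3 + 1 : ℕ) : ℝ) * s)
        = (p:ℝ) ^ (-s) * x ^ q
      rw [show 2 * (q*3 + 1) / 3 = 2*q by omega, key (2*q) (q*3+1) (-s + ((2:ℝ)-3*s)*q)
        (by push_cast; ring), hxq q, ← Real.rpow_add hp0]
    · show (p:ℝ) ^ (2 * (q*3 + 2) / 3) / (p:ℝ) ^ (((q*3 + 2 : ℕ) : ℝ) * s)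
        = (p:ℝ) ^ ((1:ℝ) - 2*s) * x ^ q
      rw [show 2 * (q*3 + 2) / 3 = 2*q + 1 by omega,
        key (2*q+1) (q*3+2) (((1:ℝ)-2*s) + ((2:ℝ)-3*s)*q) (by push_cast; ring),
        hxq q, ← Real.rpow_add hp0]
  have hg0 : ∀ i, 0 ≤ g i := by
    intro i; fin_cases i
    · exact zero_le_one
    · exact Real.rpow_nonneg hp0.le _
    · exact Real.rpow_nonneg hp0.le _
  have hsum : Summable (fun qi : ℕ × Fin 3 => g qi.2 * x ^ qi.1) := by
    rw [summable_prod_of_nonneg (fun qi => mul_nonneg (hg0 _) (pow_nonneg hx0 _))]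
    constructor
    · intro q; exact Summable.of_finite
    · have : (fun q : ℕ => ∑' i : Fin 3, g i * x ^ q) = fun q => (∑ i, g i) * x ^ q := by
        funext q
        rw [tsum_fintype, Finset.sum_mul]
      rw [this]
      exact (summable_geometric_of_lt_one hx0 hx1).mul_left _
  calc (∑' r : ℕ, (p : ℝ) ^ (2 * r / 3) / (p : ℝ) ^ ((r : ℝ) * s))
      = ∑' qi : ℕ × Fin 3, (p:ℝ) ^ (2 * ((Nat.divModEquiv 3).symm qi) / 3) /
          (p:ℝ) ^ ((((Nat.divModEquiv 3).symm qi : ℕ) : ℝ) * s) :=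
        ((Nat.divModEquiv 3).symm.tsum_eq _).symm
    _ = ∑' qi : ℕ × Fin 3, g qi.2 * x ^ qi.1 := by
        exact tsum_congr hkey
    _ = ∑' q : ℕ, ∑' i : Fin 3, g i * x ^ q := Summable.tsum_prod' hsum (fun q => Summable.of_finite)
    _ = ∑' q : ℕ, (1 + (p:ℝ) ^ (-s) + (p:ℝ) ^ ((1:ℝ) - 2*s)) * x ^ q := by
        apply tsum_congr; intro q
        rw [tsum_fintype, Fin.sum_univ_three]
        simp [hgdef]; ring
    _ = (1 + (p:ℝ) ^ (-s) + (p:ℝ) ^ ((1:ℝ) - 2*s)) * (1 - x)⁻¹ := by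
        rw [tsum_mul_left, tsum_geometric_of_lt_one hx0 hx1]
    _ = (1 - x)⁻¹ * (1 + (p:ℝ) ^ (-s) + (p:ℝ) ^ ((1:ℝ) - 2*s)) := mul_comm _ _
end
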